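/- arXiv:2101.07795 — 2 statements merged into one kernel-verified Lean document; each statement's English description precedes it below -/
import Mathlib

section
/- Let D_p and D_r be N×N diagonal matrices with positive diagonal entries, and set L = D_r^{1/2} D_p^{−1/2}. Let s₀,…,s_K ∈ ℝ^N and q₀,…,q_K ∈ ℝ^N, and let V be an N×N real matrix satisfying (i) Vᵀ D_p V = D_p and (ii) V L s_k = q_k for all 0 ≤ k ≤ K. Then Lᵀ Vᵀ (D_p − Σ_{k=0}^K D_p q_k q_kᵀ D_p) V L = D_r − Σ_{k=0}^K D_r s_k s_kᵀ D_r; equivalently, for all ψ, ψ̃ ∈ ℝ^N, ψᵀ Lᵀ Vᵀ (D_p − Σ_k D_p q_k q_kᵀ D_p) V L ψ̃ = ψᵀ (D_r − Σ_k D_r s_k s_kᵀ D_r) ψ̃. (Hence the rotated process v_P^q(V L ψ) has the same covariance structure as v_R^s(ψ), proving the validity of the Khmaladze rotation.) -/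
/-! With `M = V L`, hypothesis (ii) says `q_k = M s_k`, so
`D_p q_k q_kᵀ D_p = D_p M (s_k s_kᵀ) Mᵀ D_p`, and the congruence by `M` turns the whole
`q`-covariance into the same expression built from `s_k` and the Gram matrix `Mᵀ D_p M`.
By (i) that Gram matrix is `Lᵀ D_p L`, which is `D_r` because `L` is
diagonal with squared entries `r_j / p_j`. -/

open Matrix

namespace Matrix

variable {l m n ι R : Type*} [Fintype m] [Fintype n] [Fintype ι] [CommRing R]

theorem vecMulVec_mulVec_mulVec (M : Matrix l m R) (u v : m → R) :
    vecMulVec (M *ᵥ u) (M *ᵥ v) = M * vecMulVec u v * Mᵀ := by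
  rw [mul_vecMulVec, vecMulVec_mul, vecMul_transpose]

theorem transpose_mul_sub_sum_vecMulVec_mul (A : Matrix m m R) (M : Matrix m n R)
    (s : ι → n → R) :
    Mᵀ * (A - ∑ k, A * vecMulVec (M *ᵥ s k) (M *ᵥ s k) * A) * M =
      Mᵀ * A * M - ∑ k, (Mᵀ * A * M) * vecMulVec (s k) (s k) * (Mᵀ * A * M) := by
  simp only [vecMulVec_mulVec_mulVec, Matrix.mul_sub, Matrix.sub_mul, Matrix.mul_sum,
    Matrix.sum_mul, Matrix.mul_assoc]

theorem inv_diagonal_of_ne_zero {K : Type*} [Field K] [DecidableEq n] {v : n → K}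
    (hv : ∀ j, v j ≠ 0) : (diagonal v)⁻¹ = diagonal fun j => (v j)⁻¹ := by
  refine inv_eq_left_inv ?_
  rw [diagonal_mul_diagonal, ← diagonal_one]
  exact congrArg diagonal (funext fun j => inv_mul_cancel₀ (hv j))

theorem diagonal_sqrt_mul_inv_sqrt_congr [DecidableEq n]
    {p r : n → ℝ} (hp : ∀ j, 0 < p j) (hr : ∀ j, 0 ≤ r j) :
    (diagonal (fun j => √(r j)) * (diagonal (fun j => √(p j)))⁻¹)ᵀ * diagonal p *
      (diagonal (fun j => √(r j)) * (diagonal (fun j => √(p j)))⁻¹) = diagonal r := by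
  have hsp (j : n) : √(p j) ≠ 0 := (Real.sqrt_pos.2 (hp j)).ne'
  rw [inv_diagonal_of_ne_zero hsp, diagonal_mul_diagonal, diagonal_transpose,
    diagonal_mul_diagonal, diagonal_mul_diagonal]
  refine congrArg diagonal (funext fun j => ?_)
  field_simp [hsp j]
  rw [Real.sq_sqrt (hr j), Real.sq_sqrt (hp j).le, mul_comm]

end Matrix

theorem khmaladze_rotation_covariance_general {N K : ℕ}
    (p r : Fin N → ℝ) (hp : ∀ j, 0 < p j) (hr : ∀ j, 0 < r j)
    (s q : Fin (K + 1) → Fin N → ℝ) (V : Matrix (Fin N) (Fin N) ℝ)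
    (L : Matrix (Fin N) (Fin N) ℝ)
    (hL : L = Matrix.diagonal (fun j => Real.sqrt (r j)) *
      (Matrix.diagonal (fun j => Real.sqrt (p j)))⁻¹)
    (hV : Vᵀ * Matrix.diagonal p * V = Matrix.diagonal p)
    (hVq : ∀ k, V *ᵥ (L *ᵥ s k) = q k) :
    Lᵀ * Vᵀ *
        (Matrix.diagonal p -
          ∑ k, Matrix.diagonal p * vecMulVec (q k) (q k) * Matrix.diagonal p) *
        V * L =
      Matrix.diagonal r -
        ∑ k, Matrix.diagonal r * vecMulVec (s k) (s k) * Matrix.diagonal r := by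
  have hq : q = fun k => (V * L) *ᵥ s k := funext fun k => by rw [← hVq k, mulVec_mulVec]
  have hcongr : (V * L)ᵀ * diagonal p * (V * L) = diagonal r := calc
    (V * L)ᵀ * diagonal p * (V * L) = Lᵀ * (Vᵀ * diagonal p * V) * L := by
      simp only [transpose_mul, Matrix.mul_assoc]
    _ = diagonal r := by
      rw [hV, hL]
      exact diagonal_sqrt_mul_inv_sqrt_congr hp fun j => (hr j).le
  rw [hq, ← hcongr, ← transpose_mul_sub_sum_vecMulVec_mul, transpose_mul]
  simp only [Matrix.mul_assoc]

/-- If `V` preserves the `P`-norm (`Vᵀ D_p V = D_p`) and maps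
`L s_k` to `q_k` for `0 ≤ k ≤ K`, where `L = D_r^{1/2} D_p^{-1/2}`, then
`Lᵀ Vᵀ (D_p - Σ_k D_p q_k q_kᵀ D_p) V L = D_r - Σ_k D_r s_k s_kᵀ D_r`:
the rotated process `v_P^q(V L ψ)` has the same covariance structure as
`v_R^s(ψ)`, proving the validity of the Khmaladze rotation. -/
theorem khmaladze_rotation_covariance {N K : ℕ} (hN : 0 < N)
    (p r : Fin N → ℝ) (hp : ∀ j, 0 < p j) (hr : ∀ j, 0 < r j)
    (s q : Fin (K + 1) → Fin N → ℝ) (V : Matrix (Fin N) (Fin N) ℝ)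
    (L : Matrix (Fin N) (Fin N) ℝ)
    (hL : L = Matrix.diagonal (fun j => Real.sqrt (r j)) *
      (Matrix.diagonal (fun j => Real.sqrt (p j)))⁻¹)
    (hV : Vᵀ * Matrix.diagonal p * V = Matrix.diagonal p)
    (hVq : ∀ k, V *ᵥ (L *ᵥ s k) = q k) :
    Lᵀ * Vᵀ *
        (Matrix.diagonal p -
          ∑ k, Matrix.diagonal p * vecMulVec (q k) (q k) * Matrix.diagonal p) *
        V * L =
      Matrix.diagonal r -
        ∑ k, Matrix.diagonal r * vecMulVec (s k) (s k) * Matrix.diagonal r :=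
  khmaladze_rotation_covariance_general p r hp hr s q V L hL hV hVq
end

section
/- Let D_p be an N×N diagonal matrix with positive diagonal entries, and let (q_k)_{k=0}^K and (a_k)_{k=0}^K be two D_p-orthonormal families in ℝ^N. Define V_{−1} = I and, recursively for j = 0, 1, …, K: ã_j = V_{j−1} a_j; assume q_jᵀ D_p ã_j ≠ 1; W_j = I − c_j (q_j − ã_j)(q_j − ã_j)ᵀ D_p with c_j = 1/(1 − q_jᵀ D_p ã_j); and V_j = W_j V_{j−1}. Then the matrix V_K satisfies V_K a_k = q_k for all 0 ≤ k ≤ K, and V_Kᵀ D_p V_K = D_p. -/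
open Matrix

/-! With `u_j = q_j - ã_j`, orthonormality gives `c_j ⟨u_j, u_j⟩_P = 2`, so `W_j` is a
`D_p`-reflection and hence a `D_p`-isometry; by induction so is `V_{j-1}`, which therefore keeps
`ã_j` a `P`-unit vector. The reflection `W_j` then swaps `ã_j` and `q_j` and fixes every `q_k`
with `k < j`: such `q_k = V_{j-1} a_k` is `P`-orthogonal to `q_j` and to `ã_j = V_{j-1} a_j`. -/

/-- The recursively defined sequence of products of P-reflections:
`khmaladzeV p q a 0 = V_{-1} = I` and, for `j ≥ 0`,
`khmaladzeV p q a (j+1) = V_j = W_j V_{j-1}` where `ã_j = V_{j-1} a_j`,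
`c_j = 1/(1 - ⟨q_j, ã_j⟩_P)` and
`W_j = I - c_j (q_j - ã_j)(q_j - ã_j)ᵀ D_p`. -/
noncomputable def khmaladzeV {N : ℕ} (p : Fin N → ℝ) (q a : ℕ → Fin N → ℝ) :
    ℕ → Matrix (Fin N) (Fin N) ℝ
  | 0 => 1
  | j + 1 =>
    let Vprev := khmaladzeV p q a j
    let atil := Vprev *ᵥ a j
    let c : ℝ := 1 / (1 - q j ⬝ᵥ (Matrix.diagonal p *ᵥ atil))
    (1 - c • (vecMulVec (q j - atil) (q j - atil) * Matrix.diagonal p)) * Vprev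

section FormReflection

variable {n R : Type*} [Fintype n]

def IsFormIsometry [CommRing R] (P V : Matrix n n R) : Prop :=
  Vᵀ * P * V = P

theorem IsFormIsometry.mul [CommRing R] {P V W : Matrix n n R} (hW : IsFormIsometry P W)
    (hV : IsFormIsometry P V) : IsFormIsometry P (W * V) := by
  calc (W * V)ᵀ * P * (W * V) = Vᵀ * (Wᵀ * P * W) * V := by
        simp only [transpose_mul, Matrix.mul_assoc]
    _ = P := by rw [hW, hV]

theorem IsFormIsometry.dotProduct_mulVec [CommRing R] {P V : Matrix n n R}
    (hV : IsFormIsometry P V) (x y : n → R) :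
    (V *ᵥ x) ⬝ᵥ (P *ᵥ (V *ᵥ y)) = x ⬝ᵥ (P *ᵥ y) := by
  rw [← vecMul_transpose, Matrix.dotProduct_mulVec, Matrix.dotProduct_mulVec, vecMul_vecMul,
    vecMul_vecMul, ← Matrix.mul_assoc, hV, Matrix.dotProduct_mulVec]

theorem one_div_mul_dotProduct_sub_eq_two [Field R] {P : Matrix n n R} {x y : n → R}
    (hP : P.IsSymm) (hx : x ⬝ᵥ (P *ᵥ x) = 1) (hy : y ⬝ᵥ (P *ᵥ y) = 1)
    (hxy : y ⬝ᵥ (P *ᵥ x) ≠ 1) :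
    1 / (1 - y ⬝ᵥ (P *ᵥ x)) * ((y - x) ⬝ᵥ (P *ᵥ (y - x))) = 2 := by
  have hsymm : x ⬝ᵥ (P *ᵥ y) = y ⬝ᵥ (P *ᵥ x) := by
    rw [← dotProduct_transpose_mulVec, hP.eq]
  have hnorm : (y - x) ⬝ᵥ (P *ᵥ (y - x)) = 2 * (1 - y ⬝ᵥ (P *ᵥ x)) := by
    rw [mulVec_sub, dotProduct_sub, sub_dotProduct, sub_dotProduct, hx, hy, hsymm]
    ring
  rw [hnorm, mul_left_comm, one_div_mul_cancel (sub_ne_zero.2 hxy.symm), mul_one]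

variable [DecidableEq n]

/-- With `c * ⟨u, u⟩_P = 2` this is the reflection in the `P`-orthogonal complement of `u`. -/
def formReflection [CommRing R] (P : Matrix n n R) (c : R) (u : n → R) : Matrix n n R :=
  1 - c • (vecMulVec u u * P)

section CommRing

variable [CommRing R] {P : Matrix n n R} {c : R} {u : n → R}

theorem formReflection_mulVec (x : n → R) :
    formReflection P c u *ᵥ x = x - (c * (u ⬝ᵥ (P *ᵥ x))) • u := by
  rw [formReflection, sub_mulVec, one_mulVec, smul_mulVec, ← mulVec_mulVec, vecMulVec_mulVec,
    op_smul_eq_smul, smul_smul]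

theorem formReflection_mulVec_of_dotProduct_eq_zero {x : n → R} (h : u ⬝ᵥ (P *ᵥ x) = 0) :
    formReflection P c u *ᵥ x = x := by
  rw [formReflection_mulVec, h, mul_zero, zero_smul, sub_zero]

theorem isFormIsometry_formReflection (hP : P.IsSymm) (hc : c * (u ⬝ᵥ (P *ᵥ u)) = 2) :
    IsFormIsometry P (formReflection P c u) := by
  set U := vecMulVec u u
  have hUPU : U * P * U = (u ⬝ᵥ (P *ᵥ u)) • U := by
    rw [vecMulVec_mul, vecMulVec_mul_vecMulVec, ← dotProduct_mulVec, vecMulVec_smul]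
  have hWt : (formReflection P c u)ᵀ = 1 - c • (P * U) := by
    rw [formReflection, transpose_sub, transpose_one, transpose_smul, transpose_mul, hP.eq,
      transpose_vecMulVec]
  rw [IsFormIsometry, hWt, formReflection]
  calc (1 - c • (P * U)) * P * (1 - c • (U * P))
      = P - (2 * c) • (P * U * P) + (c * c) • (P * (U * P * U) * P) := by
        simp only [mul_sub, sub_mul, Matrix.mul_smul, Matrix.smul_mul, one_mul, mul_one,
          smul_smul, Matrix.mul_assoc, two_mul, add_smul]
        abel
    _ = P := by
        rw [hUPU, Matrix.mul_smul, Matrix.smul_mul, smul_smul, mul_assoc c c, hc, mul_comm c 2,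
          sub_add_cancel]

end CommRing

theorem formReflection_sub_mulVec_self [Field R] {P : Matrix n n R} {x y : n → R}
    (hx : x ⬝ᵥ (P *ᵥ x) = 1) (hxy : y ⬝ᵥ (P *ᵥ x) ≠ 1) :
    formReflection P (1 / (1 - y ⬝ᵥ (P *ᵥ x))) (y - x) *ᵥ x = y := by
  have h : 1 / (1 - y ⬝ᵥ (P *ᵥ x)) * ((y - x) ⬝ᵥ (P *ᵥ x)) = -1 := by
    rw [sub_dotProduct, hx, ← neg_sub 1 (y ⬝ᵥ (P *ᵥ x)), mul_neg,
      one_div_mul_cancel (sub_ne_zero.2 hxy.symm)]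
  rw [formReflection_mulVec, h, neg_one_smul, sub_neg_eq_add, add_sub_cancel]

end FormReflection

theorem khmaladzeV_succ {N : ℕ} (p : Fin N → ℝ) (q a : ℕ → Fin N → ℝ) (j : ℕ) :
    khmaladzeV p q a (j + 1) =
      formReflection (diagonal p)
        (1 / (1 - q j ⬝ᵥ (diagonal p *ᵥ (khmaladzeV p q a j *ᵥ a j))))
        (q j - khmaladzeV p q a j *ᵥ a j) * khmaladzeV p q a j :=
  rfl

section Khmaladze

variable {N K : ℕ} {p : Fin N → ℝ} {q a : ℕ → Fin N → ℝ}

theorem khmaladzeV_succ_spec {j : ℕ} (hj : j ≤ K)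
    (hq : ∀ j ≤ K, ∀ k ≤ K, q j ⬝ᵥ (diagonal p *ᵥ q k) = if j = k then 1 else 0)
    (ha : ∀ j ≤ K, ∀ k ≤ K, a j ⬝ᵥ (diagonal p *ᵥ a k) = if j = k then 1 else 0)
    (hne : q j ⬝ᵥ (diagonal p *ᵥ (khmaladzeV p q a j *ᵥ a j)) ≠ 1)
    (hV : IsFormIsometry (diagonal p) (khmaladzeV p q a j))
    (hmap : ∀ k < j, khmaladzeV p q a j *ᵥ a k = q k) :
    IsFormIsometry (diagonal p) (khmaladzeV p q a (j + 1)) ∧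
      ∀ k < j + 1, khmaladzeV p q a (j + 1) *ᵥ a k = q k := by
  have hnorm :
      (khmaladzeV p q a j *ᵥ a j) ⬝ᵥ (diagonal p *ᵥ (khmaladzeV p q a j *ᵥ a j)) = 1 := by
    rw [hV.dotProduct_mulVec, ha j hj j hj, if_pos rfl]
  have hc := one_div_mul_dotProduct_sub_eq_two (isSymm_diagonal p) hnorm
    (by rw [hq j hj j hj, if_pos rfl]) hne
  refine ⟨?_, fun k hk => ?_⟩
  · rw [khmaladzeV_succ]
    exact (isFormIsometry_formReflection (isSymm_diagonal p) hc).mul hV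
  · rw [khmaladzeV_succ, ← mulVec_mulVec]
    rcases Nat.lt_succ_iff_lt_or_eq.mp hk with hk | rfl
    · rw [hmap k hk]
      apply formReflection_mulVec_of_dotProduct_eq_zero
      rw [sub_dotProduct, hq j hj k (by omega), ← hmap k hk, hV.dotProduct_mulVec,
        ha j hj k (by omega), if_neg (by omega), sub_self]
    · exact formReflection_sub_mulVec_self hnorm hne

theorem khmaladzeV_spec
    (hq : ∀ j ≤ K, ∀ k ≤ K, q j ⬝ᵥ (diagonal p *ᵥ q k) = if j = k then 1 else 0)
    (ha : ∀ j ≤ K, ∀ k ≤ K, a j ⬝ᵥ (diagonal p *ᵥ a k) = if j = k then 1 else 0)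
    (hne : ∀ j ≤ K, q j ⬝ᵥ (diagonal p *ᵥ (khmaladzeV p q a j *ᵥ a j)) ≠ 1) :
    ∀ j ≤ K + 1, IsFormIsometry (diagonal p) (khmaladzeV p q a j) ∧
      ∀ k < j, khmaladzeV p q a j *ᵥ a k = q k := by
  intro j hj
  induction j with
  | zero => exact ⟨by simp [IsFormIsometry, khmaladzeV], fun k hk => absurd hk k.not_lt_zero⟩
  | succ j ih =>
    obtain ⟨hV, hmap⟩ := ih (by omega)
    exact khmaladzeV_succ_spec (by omega) hq ha (hne j (by omega)) hV hmap

end Khmaladze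

theorem khmaladzeV_maps_scores_and_preserves_norm_general {N K : ℕ}
    (p : Fin N → ℝ)
    (q a : ℕ → Fin N → ℝ)
    (hq : ∀ j ≤ K, ∀ k ≤ K,
      q j ⬝ᵥ (Matrix.diagonal p *ᵥ q k) = if j = k then 1 else 0)
    (ha : ∀ j ≤ K, ∀ k ≤ K,
      a j ⬝ᵥ (Matrix.diagonal p *ᵥ a k) = if j = k then 1 else 0)
    (hne : ∀ j ≤ K,
      q j ⬝ᵥ (Matrix.diagonal p *ᵥ (khmaladzeV p q a j *ᵥ a j)) ≠ 1) :
    (∀ k ≤ K, khmaladzeV p q a (K + 1) *ᵥ a k = q k) ∧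
    (khmaladzeV p q a (K + 1))ᵀ * Matrix.diagonal p * khmaladzeV p q a (K + 1) =
      Matrix.diagonal p := by
  obtain ⟨hV, hmap⟩ := khmaladzeV_spec hq ha hne (K + 1) le_rfl
  exact ⟨fun k hk => hmap k (Nat.lt_succ_of_le hk), hV⟩

/-- For two `D_p`-orthonormal families `(q_k)_{k=0}^K` and
`(a_k)_{k=0}^K`, with the recursively constructed `V_K` (a product of
P-reflections, assuming each `⟨q_j, ã_j⟩_P ≠ 1`), we have `V_K a_k = q_k`
for all `0 ≤ k ≤ K` and `V_Kᵀ D_p V_K = D_p`. -/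
theorem khmaladzeV_maps_scores_and_preserves_norm {N K : ℕ}
    (hK : 0 ≤ K) (hKN : K + 1 ≤ N) (p : Fin N → ℝ) (hp : ∀ j, 0 < p j)
    (q a : ℕ → Fin N → ℝ)
    (hq : ∀ j ≤ K, ∀ k ≤ K,
      q j ⬝ᵥ (Matrix.diagonal p *ᵥ q k) = if j = k then 1 else 0)
    (ha : ∀ j ≤ K, ∀ k ≤ K,
      a j ⬝ᵥ (Matrix.diagonal p *ᵥ a k) = if j = k then 1 else 0)
    (hne : ∀ j ≤ K,
      q j ⬝ᵥ (Matrix.diagonal p *ᵥ (khmaladzeV p q a j *ᵥ a j)) ≠ 1) :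
    (∀ k ≤ K, khmaladzeV p q a (K + 1) *ᵥ a k = q k) ∧
    (khmaladzeV p q a (K + 1))ᵀ * Matrix.diagonal p * khmaladzeV p q a (K + 1) =
      Matrix.diagonal p :=
  khmaladzeV_maps_scores_and_preserves_norm_general p q a hq ha hne
end
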